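/- Let (G,f) = (V,E,∂,f) be a P-filtered graph that is vertex-minimal (has no collapsible edges). Then for every v' ∈ V and every v ∈ V with v ≠ v' and f(v) ≤ f(v'), we have [v] ≠ [v'] in π₀((G,f)_{f(v')}). -/
import Mathlib


structure Grph where
  V : Type
  E : Type
  [fintV : Fintype V]
  [fintE : Fintype E]
  [decV : DecidableEq V]
  [decE : DecidableEq E]
  bnd : E → V × V

attribute [instance] Grph.fintV Grph.fintE Grph.decV Grph.decE

/-- boundary map k⟨E⟩ → k⟨V⟩, e ↦ e₁ - e₀ -/
noncomputable def Grph.d (G : Grph) (k : Type) [Field k] :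
    (G.E →₀ k) →ₗ[k] (G.V →₀ k) :=
  Finsupp.linearCombination k fun e =>
    Finsupp.single (G.bnd e).2 1 - Finsupp.single (G.bnd e).1 1

def Grph.adj (G : Grph) (v w : G.V) : Prop :=
  ∃ e, G.bnd e = (v, w) ∨ G.bnd e = (w, v)

structure FGrph (P : Type) [PartialOrder P] extends Grph where
  fV : V → P
  fE : E → P
  mono0 : ∀ e, fV (bnd e).1 ≤ fE e
  mono1 : ∀ e, fV (bnd e).2 ≤ fE e

variable {P : Type} [PartialOrder P]

/-- boundary map of the sublevel graph at grade r -/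
noncomputable def FGrph.dr (G : FGrph P) (k : Type) [Field k] (r : P) :
    ({e : G.E // G.fE e ≤ r} →₀ k) →ₗ[k] ({v : G.V // G.fV v ≤ r} →₀ k) :=
  Finsupp.linearCombination k fun e =>
    Finsupp.single ⟨(G.bnd e.1).2, le_trans (G.mono1 e.1) e.2⟩ 1 -
    Finsupp.single ⟨(G.bnd e.1).1, le_trans (G.mono0 e.1) e.2⟩ 1

noncomputable def FGrph.vmap (G : FGrph P) (k : Type) [Field k] {r s : P} (h : r ≤ s) :
    ({v : G.V // G.fV v ≤ r} →₀ k) →ₗ[k] ({v : G.V // G.fV v ≤ s} →₀ k) :=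
  Finsupp.lmapDomain k k fun v => ⟨v.1, le_trans v.2 h⟩

noncomputable def FGrph.emap (G : FGrph P) (k : Type) [Field k] {r s : P} (h : r ≤ s) :
    ({e : G.E // G.fE e ≤ r} →₀ k) →ₗ[k] ({e : G.E // G.fE e ≤ s} →₀ k) :=
  Finsupp.lmapDomain k k fun e => ⟨e.1, le_trans e.2 h⟩

lemma FGrph.dNat (G : FGrph P) (k : Type) [Field k] {r s : P} (h : r ≤ s) :
    (G.dr k s).comp (G.emap k h) = (G.vmap k h).comp (G.dr k r) := by
  apply Finsupp.lhom_ext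
  intro e a
  show (G.dr k s) ((G.emap k h) (Finsupp.single e a)) =
    (G.vmap k h) ((G.dr k r) (Finsupp.single e a))
  rw [FGrph.emap, Finsupp.lmapDomain_apply, Finsupp.mapDomain_single, FGrph.dr,
    Finsupp.linearCombination_single, FGrph.dr, Finsupp.linearCombination_single,
    map_smul, map_sub, FGrph.vmap, Finsupp.lmapDomain_apply, Finsupp.lmapDomain_apply,
    Finsupp.mapDomain_single, Finsupp.mapDomain_single]

/-- 0-dim homology of the sublevel graph at r -/
noncomputable abbrev FGrph.H0at (G : FGrph P) (k : Type) [Field k] (r : P) :=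
  ({v : G.V // G.fV v ≤ r} →₀ k) ⧸ LinearMap.range (G.dr k r)

noncomputable def FGrph.H0map (G : FGrph P) (k : Type) [Field k] {r s : P} (h : r ≤ s) :
    G.H0at k r →ₗ[k] G.H0at k s :=
  Submodule.mapQ _ _ (G.vmap k h) (by
    rintro x ⟨y, rfl⟩
    exact ⟨G.emap k h y, by
      have := LinearMap.congr_fun (G.dNat k h) y
      simpa using this⟩)

noncomputable abbrev FGrph.H1at (G : FGrph P) (k : Type) [Field k] (r : P) :=
  LinearMap.ker (G.dr k r)

noncomputable def FGrph.H1map (G : FGrph P) (k : Type) [Field k] {r s : P} (h : r ≤ s) :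
    G.H1at k r →ₗ[k] G.H1at k s :=
  (G.emap k h).restrict (p := LinearMap.ker (G.dr k r)) (q := LinearMap.ker (G.dr k s))
    (by
      intro x hx
      have := LinearMap.congr_fun (G.dNat k h) x
      simp only [LinearMap.mem_ker] at hx ⊢
      simp only [LinearMap.coe_comp, Function.comp_apply] at this
      rw [this, hx, map_zero])

def FGrph.adjAt (G : FGrph P) (r : P) (a b : G.V) : Prop :=
  ∃ e, G.fE e ≤ r ∧ (G.bnd e = (a, b) ∨ G.bnd e = (b, a))

def FGrph.connAt (G : FGrph P) (r : P) : G.V → G.V → Prop :=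
  Relation.ReflTransGen (G.adjAt r)

def FGrph.pi0At (G : FGrph P) (r : P) :=
  Quot (fun a b : {v : G.V // G.fV v ≤ r} => G.adjAt r a.1 b.1)

def FGrph.Collapsible (G : FGrph P) (e : G.E) : Prop :=
  (G.bnd e).1 ≠ (G.bnd e).2 ∧
    (G.fE e = G.fV (G.bnd e).1 ∨ G.fE e = G.fV (G.bnd e).2)

def FGrph.delete (G : FGrph P) (e : G.E) : FGrph P where
  V := G.V
  E := {d : G.E // d ≠ e}
  bnd d := G.bnd d.1
  fV := G.fV
  fE d := G.fE d.1
  mono0 d := G.mono0 d.1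
  mono1 d := G.mono1 d.1

def FGrph.Deletable (G : FGrph P) (e : G.E) : Prop :=
  (G.delete e).connAt (G.fE e) (G.bnd e).1 (G.bnd e).2

def FGrph.collapse (G : FGrph P) (e : G.E) (x y : G.V) (hxy : y ≠ x)
    (hf : G.fV y ≤ G.fV x) : FGrph P where
  V := {v : G.V // v ≠ x}
  E := {d : G.E // d ≠ e}
  bnd d :=
    (if h : (G.bnd d.1).1 = x then ⟨y, hxy⟩ else ⟨(G.bnd d.1).1, h⟩,
     if h : (G.bnd d.1).2 = x then ⟨y, hxy⟩ else ⟨(G.bnd d.1).2, h⟩)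
  fV v := G.fV v.1
  fE d := G.fE d.1
  mono0 d := by
    dsimp only
    split
    · exact le_trans hf (by rw [← ‹(G.bnd d.1).1 = x›]; exact G.mono0 d.1)
    · exact G.mono0 d.1
  mono1 d := by
    dsimp only
    split
    · exact le_trans hf (by rw [← ‹(G.bnd d.1).2 = x›]; exact G.mono1 d.1)
    · exact G.mono1 d.1


/-- in a vertex-minimal filtered graph (no collapsible edges), for any two
distinct vertices `v ≠ v'`, the classes `[v]` and `[v']` are distinct in `π₀` of the
sublevel graph at grade `f(v')`, i.e. `v` and `v'` are not connected at grade `f(v')`. -/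
theorem vertexMinimal_not_connAt (G : FGrph P)
    (hmin : ∀ e : G.E, ¬ G.Collapsible e)
    (v v' : G.V) (hvv : v ≠ v') :
    ¬ G.connAt (G.fV v') v v' := by
  intro h
  unfold FGrph.connAt at h
  have key : ∀ w, Relation.ReflTransGen (G.adjAt (G.fV v')) v w → w = v' → False := by
    intro w h
    induction h with
    | refl => exact fun hw => hvv hw
    | @tail b c h step ih =>
      intro hc
      subst hc
      by_cases hbc : b = c
      · exact ih hbc
      · obtain ⟨e, hle, hbnd⟩ := step
        apply hmin e
        rcases hbnd with hb | hb
        · refine ⟨by rw [hb]; exact hbc, Or.inr ?_⟩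
          have := G.mono1 e
          rw [hb] at this ⊢
          exact le_antisymm hle this
        · refine ⟨by rw [hb]; exact Ne.symm hbc, Or.inl ?_⟩
          have := G.mono0 e
          rw [hb] at this ⊢
          exact le_antisymm hle this
  exact key v' h rfl
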